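/- Every real Banach space with Pełczyński's property (u) has property (su). -/

import Mathlib

/-!
By property (u), `x` is weakly asymptotic to the partial sums `sₙ = y₀ + ⋯ + yₙ` of a weakly
unconditionally Cauchy series. The sequence `(sₙ)` is again non-trivial weak Cauchy, so its weak*
limit `z` lies in `X** \ X`, at positive distance from `X` because `X` is complete. Hahn–Banach
then yields uniformly bounded functionals that vanish at any finitely many `sᵢ` and tend to `1`
along `(sₙ)`, and a diagonal extraction gives `tₖ = s_{ψ k}` with functionals `gₖ` such that
`gₖ tᵢ = 0` for `i < k` and `gₖ tᵢ ≈ 1` for `i ≥ k`. The `gₖ` give the lower estimate, and the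
weak unconditional Cauchyness of `∑ yᵢ` the upper estimate, of an equivalence between `(tₖ)` and
the summing basis of `c₀`. Convex block sequences of the summing basis are isometric to the
summing basis, which is shift invariant, so `(tₖ)` is convex block shiftable; and `x - t` tends
weakly to `0` because `(sₙ)` is weak Cauchy.
-/

open Filter Topology

noncomputable section

variable {E : Type*} [NormedAddCommGroup E] [NormedSpace ℝ E]

/-- A subset of a normed space is weakly compact if its image under the identity
map into the weak space is compact in the weak topology. -/
def IsWeaklyCompact (C : Set E) : Prop :=
  IsCompact (toWeakSpace ℝ E '' C)

/-- `z` is the weak limit of the sequence `x`. -/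
def WeakLim (x : ℕ → E) (z : E) : Prop :=
  ∀ f : StrongDual ℝ E, Tendsto (fun n => f (x n)) atTop (𝓝 (f z))

/-- The sequence `x` is weakly Cauchy: `(f (x n))` converges for every functional `f`. -/
def WeakCauchySeq (x : ℕ → E) : Prop :=
  ∀ f : StrongDual ℝ E, ∃ l : ℝ, Tendsto (fun n => f (x n)) atTop (𝓝 l)

/-- `f` is affine on the convex set `K`. -/
def AffineOn (K : Set E) (f : E → E) : Prop :=
  ∀ x ∈ K, ∀ y ∈ K, ∀ t : ℝ, 0 ≤ t → t ≤ 1 →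
    f (t • x + (1 - t) • y) = t • f x + (1 - t) • f y

/-- `f` is `L`-bi-Lipschitz on `K`. -/
def IsBiLipschitzOn (L : ℝ) (K : Set E) (f : E → E) : Prop :=
  ∃ c₁ c₂ : ℝ, 0 < c₁ ∧ 0 < c₂ ∧ c₂ / c₁ ≤ L ∧
    ∀ x ∈ K, ∀ y ∈ K,
      c₁ * ‖x - y‖ ≤ ‖f x - f y‖ ∧ ‖f x - f y‖ ≤ c₂ * ‖x - y‖

/-- `f` is uniformly bi-Lipschitz on `K` (all iterates are bi-Lipschitz with the
same constants). -/
def UnifBiLipschitzOn (K : Set E) (f : E → E) : Prop :=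
  ∃ c₁ c₂ : ℝ, 0 < c₁ ∧ 0 < c₂ ∧
    ∀ p : ℕ, ∀ x ∈ K, ∀ y ∈ K,
      c₁ * ‖x - y‖ ≤ ‖f^[p] x - f^[p] y‖ ∧ ‖f^[p] x - f^[p] y‖ ≤ c₂ * ‖x - y‖

/-- `f` is uniformly Lipschitz on `K`. -/
def UnifLipschitzOn (K : Set E) (f : E → E) : Prop :=
  ∃ L : ℝ, 0 < L ∧ ∀ p : ℕ, ∀ x ∈ K, ∀ y ∈ K,
    ‖f^[p] x - f^[p] y‖ ≤ L * ‖x - y‖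

/-- `θ(f) = inf { liminf_n ‖x - fⁿ(y)‖ : x, y ∈ K }`. -/
def fpTheta (K : Set E) (f : E → E) : ℝ :=
  sInf {r : ℝ | ∃ x ∈ K, ∃ y ∈ K, r = Filter.liminf (fun n => ‖x - f^[n] y‖) atTop}

/-- `x` is a basic sequence with basis constant `𝒦`. -/
def IsBasicSeq (x : ℕ → E) (𝒦 : ℝ) : Prop :=
  (∀ n, x n ≠ 0) ∧ 1 ≤ 𝒦 ∧
    ∀ m n : ℕ, m ≤ n → ∀ a : ℕ → ℝ,
      ‖∑ i ∈ Finset.range m, a i • x i‖ ≤ 𝒦 * ‖∑ i ∈ Finset.range n, a i • x i‖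

/-- `x` is seminormalized. -/
def Seminormalized (x : ℕ → E) : Prop :=
  ∃ a b : ℝ, 0 < a ∧ ∀ n, a ≤ ‖x n‖ ∧ ‖x n‖ ≤ b

/-- `x` dominates the summing basis of `c₀` with constant `c`. -/
def DominatesSummingBasis (x : ℕ → E) (c : ℝ) : Prop :=
  ∀ m : ℕ, ∀ a : ℕ → ℝ, ∀ k ≤ m,
    c * |∑ i ∈ Finset.Icc k m, a i| ≤ ‖∑ i ∈ Finset.range (m + 1), a i • x i‖

/-- `x` is a wide-(s) sequence. -/
def IsWideS (x : ℕ → E) : Prop :=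
  Seminormalized x ∧ (∃ 𝒦, IsBasicSeq x 𝒦) ∧ ∃ c > 0, DominatesSummingBasis x c

/-- `x` is equivalent to the summing basis of `c₀`. -/
def EquivSummingBasis (x : ℕ → E) : Prop :=
  ∃ L : ℝ, 1 ≤ L ∧ ∀ m : ℕ, ∀ a : ℕ → ℝ,
    (∀ k ≤ m, (1 / L) * |∑ i ∈ Finset.Icc k m, a i| ≤
      ‖∑ i ∈ Finset.range (m + 1), a i • x i‖) ∧
    ‖∑ i ∈ Finset.range (m + 1), a i • x i‖ ≤
      L * (Finset.range (m + 1)).sup' Finset.nonempty_range_add_one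
        (fun k => |∑ i ∈ Finset.Icc k m, a i|)

/-- `x` is an `ℓ₁`-sequence. -/
def IsL1Seq (x : ℕ → E) : Prop :=
  ∃ c C : ℝ, 0 < c ∧ 0 < C ∧ ∀ m : ℕ, ∀ a : ℕ → ℝ,
    c * ∑ i ∈ Finset.range m, |a i| ≤ ‖∑ i ∈ Finset.range m, a i • x i‖ ∧
    ‖∑ i ∈ Finset.range m, a i • x i‖ ≤ C * ∑ i ∈ Finset.range m, |a i|

/-- `w` is a convex block sequence of `x`. -/
def IsConvexBlockSeq (w x : ℕ → E) : Prop :=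
  ∃ (F : ℕ → Finset ℕ) (lam : ℕ → ℝ),
    (∀ j, (F j).Nonempty) ∧
    (∀ j, ∀ i ∈ F j, ∀ i' ∈ F (j + 1), i < i') ∧
    (∀ i, 0 ≤ lam i) ∧
    (∀ j, ∑ i ∈ F j, lam i = 1) ∧
    (∀ j, w j = ∑ i ∈ F j, lam i • x i)

/-- Sequences `u` and `v` are `L`-equivalent. -/
def SeqEquiv (L : ℝ) (u v : ℕ → E) : Prop :=
  ∀ m : ℕ, ∀ a : ℕ → ℝ,
    (1 / L) * ‖∑ i ∈ Finset.range m, a i • u i‖ ≤ ‖∑ i ∈ Finset.range m, a i • v i‖ ∧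
    ‖∑ i ∈ Finset.range m, a i • v i‖ ≤ L * ‖∑ i ∈ Finset.range m, a i • u i‖

/-- `w` is uniformly `L`-shift equivalent: each shifted sequence `(w (n + p))ₙ`
is `L`-equivalent to `w`. -/
def UnifShiftEquiv (L : ℝ) (w : ℕ → E) : Prop :=
  ∀ p : ℕ, SeqEquiv L (fun n => w (n + p)) w

/-- A basic sequence is convex block shiftable if some subsequence has all of its
convex block sequences uniformly `L`-shift equivalent, for a single `L`. -/
def ConvexBlockShiftable (x : ℕ → E) : Prop :=
  (∃ 𝒦, IsBasicSeq x 𝒦) ∧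
  ∃ L : ℝ, 0 < L ∧ ∃ φ : ℕ → ℕ, StrictMono φ ∧
    ∀ w : ℕ → E, IsConvexBlockSeq w (x ∘ φ) → UnifShiftEquiv L w

/-- Pełczyński's property (u). -/
def PropertyU (E : Type*) [NormedAddCommGroup E] [NormedSpace ℝ E] : Prop :=
  ∀ x : ℕ → E, WeakCauchySeq x →
    ∃ y : ℕ → E,
      (∀ f : StrongDual ℝ E, Summable fun n => |f (y n)|) ∧
      WeakLim (fun n => x n - ∑ i ∈ Finset.range (n + 1), y i) 0

/-- Property (su). -/
def PropertySU (E : Type*) [NormedAddCommGroup E] [NormedSpace ℝ E] : Prop :=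
  ∀ x : ℕ → E, WeakCauchySeq x → ¬(∃ z, WeakLim x z) →
    ∃ w : ℕ → E, ConvexBlockShiftable w ∧ WeakLim (fun n => x n - w n) 0

open Finset NormedSpace

/-- The norm of `∑ i < m, b i • sᵢ`, where `sᵢ = e₀ + ⋯ + eᵢ` is the summing basis of `c₀`. -/
def summingNorm (m : ℕ) (b : ℕ → ℝ) : ℝ :=
  (range (m + 1)).sup' nonempty_range_add_one fun k => |∑ i ∈ Ico k m, b i|

theorem abs_sum_Ico_le_summingNorm {k m : ℕ} (hk : k ≤ m) (b : ℕ → ℝ) :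
    |∑ i ∈ Ico k m, b i| ≤ summingNorm m b :=
  le_sup' (fun k => |∑ i ∈ Ico k m, b i|) (mem_range_succ_iff.2 hk)

theorem summingNorm_nonneg (m : ℕ) (b : ℕ → ℝ) : 0 ≤ summingNorm m b :=
  (abs_nonneg _).trans (abs_sum_Ico_le_summingNorm le_rfl b)

theorem summingNorm_le {m : ℕ} {b : ℕ → ℝ} {c : ℝ}
    (h : ∀ k ≤ m, |∑ i ∈ Ico k m, b i| ≤ c) : summingNorm m b ≤ c :=
  sup'_le _ _ fun k hk => h k (mem_range_succ_iff.1 hk)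

theorem summingNorm_le_two_mul {m n : ℕ} (hmn : m ≤ n) (b : ℕ → ℝ) :
    summingNorm m b ≤ 2 * summingNorm n b := by
  refine summingNorm_le fun k hk => ?_
  rw [eq_sub_of_add_eq (sum_Ico_consecutive b hk hmn), two_mul]
  exact (abs_sub _ _).trans (add_le_add (abs_sum_Ico_le_summingNorm (hk.trans hmn) b)
    (abs_sum_Ico_le_summingNorm hmn b))

theorem abs_le_two_mul_summingNorm {i m : ℕ} (hi : i < m) (b : ℕ → ℝ) :
    |b i| ≤ 2 * summingNorm m b :=
  calc |b i| = |∑ j ∈ Ico i (i + 1), b j| := by rw [Nat.Ico_succ_singleton, sum_singleton]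
    _ ≤ summingNorm (i + 1) b := abs_sum_Ico_le_summingNorm i.le_succ b
    _ ≤ 2 * summingNorm m b := summingNorm_le_two_mul hi b

theorem abs_sum_mul_le_summingNorm {c : ℕ → ℝ} (hc : Monotone c) (hc0 : 0 ≤ c 0)
    (hc1 : ∀ n, c n ≤ 1) (m : ℕ) (a : ℕ → ℝ) :
    |∑ n ∈ range m, a n * c n| ≤ summingNorm m a := by
  set S := summingNorm m a
  -- Abel summation turns the sum into a combination of tails of `a` with weights `c 0` and
  -- `δ k ≥ 0`, of total mass `c m ≤ 1`
  set δ : ℕ → ℝ := fun k => c (k + 1) - c k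
  have hδ : ∀ k, 0 ≤ δ k := fun k => sub_nonneg.2 (hc k.le_succ)
  have habel : ∑ n ∈ range m, a n * c n
      = c 0 * ∑ n ∈ Ico 0 m, a n + ∑ k ∈ Ico 0 m, δ k * ∑ n ∈ Ico (k + 1) m, a n := by
    have hc : ∀ n, c n = c 0 + ∑ k ∈ Ico 0 n, δ k := fun n => by
      rw [← range_eq_Ico, sum_range_sub]; ring
    simp_rw [mul_sum, sum_Ico_Ico_comm', ← range_eq_Ico, ← sum_add_distrib]
    refine sum_congr rfl fun n _ => ?_
    rw [hc n, ← range_eq_Ico, mul_add, mul_sum]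
    ring_nf
  have hsum : c 0 + ∑ k ∈ Ico 0 m, δ k ≤ 1 := by
    rw [← range_eq_Ico, sum_range_sub, add_sub_cancel]
    exact hc1 m
  rw [habel]
  calc _ ≤ c 0 * S + ∑ k ∈ Ico 0 m, δ k * S := by
        refine (abs_add_le _ _).trans (add_le_add ?_ ((abs_sum_le_sum_abs _ _).trans ?_))
        · rw [abs_mul, abs_of_nonneg hc0]
          exact mul_le_mul_of_nonneg_left (abs_sum_Ico_le_summingNorm m.zero_le a) hc0
        · refine sum_le_sum fun k hk => ?_
          rw [abs_mul, abs_of_nonneg (hδ k)]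
          exact mul_le_mul_of_nonneg_left
            (abs_sum_Ico_le_summingNorm (mem_Ico.1 hk).2 a) (hδ k)
    _ = (c 0 + ∑ k ∈ Ico 0 m, δ k) * S := by rw [add_mul, sum_mul]
    _ ≤ S := mul_le_of_le_one_left (summingNorm_nonneg m a) hsum

section ConvexBlocks

variable {F : ℕ → Finset ℕ} {lam : ℕ → ℝ}

theorem lt_of_mem_block_of_lt (hF : ∀ j, (F j).Nonempty)
    (hadj : ∀ j, ∀ i ∈ F j, ∀ i' ∈ F (j + 1), i < i') {j j' : ℕ} (hjj' : j < j')
    {i i' : ℕ} (hi : i ∈ F j) (hi' : i' ∈ F j') : i < i' := by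
  induction j', hjj' using Nat.le_induction generalizing i' with
  | base => exact hadj j i hi i' hi'
  | succ n _ ih =>
    obtain ⟨i'', hi''⟩ := hF n
    exact (ih hi'').trans (hadj n i'' hi'' i' hi')

/-- The `k`-th coordinate in `c₀` of the convex block `∑ i ∈ F n, lam i • sᵢ` of the summing
basis `(sᵢ)`. -/
def blockTail (F : ℕ → Finset ℕ) (lam : ℕ → ℝ) (k n : ℕ) : ℝ :=
  ∑ i ∈ F n with k ≤ i, lam i

theorem blockTail_eq_one {k n : ℕ} (hlam1 : ∑ i ∈ F n, lam i = 1) (h : ∀ i ∈ F n, k ≤ i) :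
    blockTail F lam k n = 1 := by
  rw [blockTail, filter_true_of_mem h, hlam1]

theorem blockTail_eq_zero {k n : ℕ} (h : ∀ i ∈ F n, i < k) : blockTail F lam k n = 0 := by
  rw [blockTail, filter_false_of_mem fun i hi => not_le.2 (h i hi), sum_empty]

theorem blockTail_nonneg (hlam0 : ∀ i, 0 ≤ lam i) (k n : ℕ) : 0 ≤ blockTail F lam k n :=
  sum_nonneg fun i _ => hlam0 i

theorem blockTail_le_one (hlam0 : ∀ i, 0 ≤ lam i) (hlam1 : ∀ j, ∑ i ∈ F j, lam i = 1)
    (k n : ℕ) : blockTail F lam k n ≤ 1 :=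
  hlam1 n ▸ sum_le_sum_of_subset_of_nonneg (filter_subset _ _) fun i _ _ => hlam0 i

theorem monotone_blockTail (hF : ∀ j, (F j).Nonempty)
    (hadj : ∀ j, ∀ i ∈ F j, ∀ i' ∈ F (j + 1), i < i') (hlam0 : ∀ i, 0 ≤ lam i)
    (hlam1 : ∀ j, ∑ i ∈ F j, lam i = 1) (k : ℕ) : Monotone (blockTail F lam k) := by
  intro n n' hnn'
  rcases hnn'.eq_or_lt with rfl | hlt
  · rfl
  by_cases h : ∃ i ∈ F n, k ≤ i
  · obtain ⟨i, hi, hki⟩ := h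
    rw [blockTail_eq_one (hlam1 n') fun i' hi' =>
      hki.trans (lt_of_mem_block_of_lt hF hadj hlt hi hi').le]
    exact blockTail_le_one hlam0 hlam1 k n
  · push Not at h
    rw [blockTail_eq_zero h]
    exact blockTail_nonneg hlam0 k n'

theorem sum_Ico_convexBlockCoeff {m N : ℕ} (hN : ∀ n < m, F n ⊆ range N) (a : ℕ → ℝ)
    (k : ℕ) :
    ∑ i ∈ Ico k N, ∑ n ∈ range m, a n * (if i ∈ F n then lam i else 0) =
      ∑ n ∈ range m, a n * blockTail F lam k n := by
  rw [sum_comm]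
  refine sum_congr rfl fun n hn => ?_
  rw [← mul_sum, sum_ite_mem, blockTail]
  congr 2
  ext i
  have := @hN n (mem_range.1 hn) i
  simp only [mem_inter, mem_Ico, mem_filter, mem_range] at this ⊢
  constructor
  · rintro ⟨⟨hki, -⟩, hi⟩; exact ⟨hi, hki⟩
  · rintro ⟨hi, hki⟩; exact ⟨⟨hki, this hi⟩, hi⟩

/-- Convex blocks of the summing basis span isometric copies of the summing basis. -/
theorem summingNorm_convexBlock (hF : ∀ j, (F j).Nonempty)
    (hadj : ∀ j, ∀ i ∈ F j, ∀ i' ∈ F (j + 1), i < i') (hlam0 : ∀ i, 0 ≤ lam i)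
    (hlam1 : ∀ j, ∑ i ∈ F j, lam i = 1) {m N : ℕ} (hN : ∀ n < m, F n ⊆ range N)
    (a : ℕ → ℝ) :
    summingNorm N (fun i => ∑ n ∈ range m, a n * if i ∈ F n then lam i else 0) =
      summingNorm m a := by
  have htail := sum_Ico_convexBlockCoeff (lam := lam) hN a
  apply le_antisymm
  · refine summingNorm_le fun k _ => ?_
    rw [htail]
    exact abs_sum_mul_le_summingNorm (monotone_blockTail hF hadj hlam0 hlam1 k)
      (blockTail_nonneg hlam0 k 0) (blockTail_le_one hlam0 hlam1 k) m a
  · refine summingNorm_le fun j hj => ?_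
    rcases hj.lt_or_eq with hj | rfl
    · set k := (F j).min' (hF j)
      have hk : k ≤ N := (mem_range.1 (hN j hj ((F j).min'_mem _))).le
      refine le_of_eq_of_le ?_ (abs_sum_Ico_le_summingNorm hk _)
      have hlow : ∑ n ∈ range j, a n * blockTail F lam k n = 0 :=
        sum_eq_zero fun n hn => by
          rw [blockTail_eq_zero fun i hi =>
            lt_of_mem_block_of_lt hF hadj (mem_range.1 hn) hi ((F j).min'_mem _), mul_zero]
      have hhigh : ∑ n ∈ Ico j m, a n * blockTail F lam k n = ∑ n ∈ Ico j m, a n := by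
        refine sum_congr rfl fun n hn => ?_
        rw [blockTail_eq_one (hlam1 n), mul_one]
        intro i hi
        rcases (mem_Ico.1 hn).1.eq_or_lt with rfl | hjn
        · exact (F j).min'_le i hi
        · exact (lt_of_mem_block_of_lt hF hadj hjn ((F j).min'_mem _) hi).le
      rw [htail, ← sum_range_add_sum_Ico _ hj.le, hlow, hhigh, zero_add]
    · simpa using summingNorm_nonneg N _

end ConvexBlocks

theorem sum_smul_sum_smul_comm {ι κ : Type*} (s : Finset ι) (u : Finset κ) (a : ι → ℝ)
    (c : ι → κ → ℝ) (t : κ → E) :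
    ∑ n ∈ s, a n • ∑ i ∈ u, c n i • t i = ∑ i ∈ u, (∑ n ∈ s, a n * c n i) • t i := by
  simp_rw [smul_sum, smul_smul, sum_smul]
  exact sum_comm

theorem IsConvexBlockSeq.shift {w t : ℕ → E} (hw : IsConvexBlockSeq w t) (p : ℕ) :
    IsConvexBlockSeq (fun n => w (n + p)) t := by
  obtain ⟨F, lam, hF, hadj, hlam0, hlam1, hwF⟩ := hw
  exact ⟨fun j => F (j + p), lam, fun j => hF _,
    fun j => by simpa only [Nat.add_right_comm j 1 p] using hadj (j + p), hlam0,
    fun j => hlam1 _, fun j => hwF _⟩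

def EquivSummingBasisWith (L : ℝ) (t : ℕ → E) : Prop :=
  ∀ m b, summingNorm m b ≤ L * ‖∑ i ∈ range m, b i • t i‖ ∧
    ‖∑ i ∈ range m, b i • t i‖ ≤ L * summingNorm m b

namespace EquivSummingBasisWith

variable {L L₁ L₂ : ℝ} {t u v w : ℕ → E}

theorem of_bounds (hlow : ∀ m b, summingNorm m b ≤ L₁ * ‖∑ i ∈ range m, b i • t i‖)
    (hup : ∀ m b, ‖∑ i ∈ range m, b i • t i‖ ≤ L₂ * summingNorm m b) :
    EquivSummingBasisWith (max L₁ L₂) t := fun m b =>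
  ⟨(hlow m b).trans (mul_le_mul_of_nonneg_right (le_max_left _ _) (norm_nonneg _)),
    (hup m b).trans (mul_le_mul_of_nonneg_right (le_max_right _ _) (summingNorm_nonneg m b))⟩

theorem one_le_mul_norm (ht : EquivSummingBasisWith L t) (n : ℕ) : 1 ≤ L * ‖t n‖ :=
  calc 1 = |∑ i ∈ Ico n (n + 1), (Pi.single n 1 : ℕ → ℝ) i| := by simp
    _ ≤ summingNorm (n + 1) (Pi.single n 1) := abs_sum_Ico_le_summingNorm n.le_succ _
    _ ≤ L * ‖∑ i ∈ range (n + 1), (Pi.single n 1 : ℕ → ℝ) i • t i‖ := (ht _ _).1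
    _ = L * ‖t n‖ := by simp [Pi.single_apply]

theorem pos (ht : EquivSummingBasisWith L t) : 0 < L := by
  by_contra! hL
  linarith [ht.one_le_mul_norm 0, mul_nonpos_of_nonpos_of_nonneg hL (norm_nonneg (t 0))]

theorem ne_zero (ht : EquivSummingBasisWith L t) (n : ℕ) : t n ≠ 0 := fun h0 => by
  simpa [h0] using one_pos.trans_le (ht.one_le_mul_norm n)

theorem isBasicSeq (ht : EquivSummingBasisWith L t) : IsBasicSeq t (max 1 (2 * L * L)) := by
  refine ⟨ht.ne_zero, le_max_left _ _, fun m n hmn b => ?_⟩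
  have hL := ht.pos.le
  calc ‖∑ i ∈ range m, b i • t i‖ ≤ L * summingNorm m b := (ht m b).2
    _ ≤ L * (2 * summingNorm n b) := by gcongr; exact summingNorm_le_two_mul hmn b
    _ ≤ L * (2 * (L * ‖∑ i ∈ range n, b i • t i‖)) := by gcongr; exact (ht n b).1
    _ = 2 * L * L * ‖∑ i ∈ range n, b i • t i‖ := by ring
    _ ≤ max 1 (2 * L * L) * ‖∑ i ∈ range n, b i • t i‖ := by gcongr; exact le_max_right _ _

theorem seqEquiv (hu : EquivSummingBasisWith L u) (hv : EquivSummingBasisWith L v) :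
    SeqEquiv (L * L) u v := by
  have key : ∀ {u v : ℕ → E}, EquivSummingBasisWith L u → EquivSummingBasisWith L v →
      ∀ m (b : ℕ → ℝ), ‖∑ i ∈ range m, b i • u i‖ ≤ L * L * ‖∑ i ∈ range m, b i • v i‖ :=
    fun hu hv m b =>
      calc _ ≤ L * summingNorm m b := (hu m b).2
        _ ≤ L * (L * ‖_‖) := mul_le_mul_of_nonneg_left (hv m b).1 hu.pos.le
        _ = _ := (mul_assoc _ _ _).symm
  refine fun m b => ⟨?_, key hv hu m b⟩
  rw [one_div, inv_mul_le_iff₀ (mul_pos hu.pos hu.pos)]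
  exact key hu hv m b

theorem of_isConvexBlockSeq (ht : EquivSummingBasisWith L t) (hw : IsConvexBlockSeq w t) :
    EquivSummingBasisWith L w := by
  obtain ⟨F, lam, hF, hadj, hlam0, hlam1, hwF⟩ := hw
  intro m a
  set N := ((range m).biUnion F).sup id + 1
  have hN : ∀ n < m, F n ⊆ range N := fun n hn i hi =>
    mem_range.2 (Nat.lt_succ_of_le (le_sup (f := id) (mem_biUnion.2 ⟨n, mem_range.2 hn, hi⟩)))
  have hsum : ∑ n ∈ range m, a n • w n =
      ∑ i ∈ range N, (∑ n ∈ range m, a n * if i ∈ F n then lam i else 0) • t i := by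
    rw [← sum_smul_sum_smul_comm]
    refine sum_congr rfl fun n hn => ?_
    simp_rw [hwF n, ite_smul, zero_smul, sum_ite_mem, inter_eq_right.2 (hN n (mem_range.1 hn))]
  rw [hsum, ← summingNorm_convexBlock hF hadj hlam0 hlam1 hN a]
  exact ht N _

theorem convexBlockShiftable (ht : EquivSummingBasisWith L t) : ConvexBlockShiftable t :=
  ⟨⟨_, ht.isBasicSeq⟩, L * L, mul_pos ht.pos ht.pos, id, strictMono_id, fun _ hw p =>
    (ht.of_isConvexBlockSeq (hw.shift p)).seqEquiv (ht.of_isConvexBlockSeq hw)⟩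

end EquivSummingBasisWith

theorem exists_bound_of_weakly_bounded {ι : Type*} (v : ι → E)
    (h : ∀ f : StrongDual ℝ E, ∃ C, ∀ i, ‖f (v i)‖ ≤ C) : ∃ C, ∀ i, ‖v i‖ ≤ C := by
  obtain ⟨C, hC⟩ := banach_steinhaus (g := fun i => inclusionInDoubleDual ℝ E (v i)) h
  exact ⟨C, fun i => (inclusionInDoubleDualLi ℝ).norm_map (v i) ▸ hC i⟩

theorem exists_norm_sum_smul_le_of_summable {y : ℕ → E}
    (hy : ∀ f : StrongDual ℝ E, Summable fun n => |f (y n)|) :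
    ∃ C, ∀ m (β : ℕ → ℝ) B, 0 ≤ B → (∀ i < m, |β i| ≤ B) →
      ‖∑ i ∈ range m, β i • y i‖ ≤ C * B := by
  obtain ⟨C, hC⟩ := exists_bound_of_weakly_bounded
    (fun p : {p : ℕ × (ℕ → ℝ) // ∀ i < p.1, |p.2 i| ≤ 1} => ∑ i ∈ range p.1.1, p.1.2 i • y i)
    fun f => ⟨∑' n, |f (y n)|, fun ⟨⟨m, β⟩, hβ⟩ => by
      simp only [map_sum, map_smul, smul_eq_mul, Real.norm_eq_abs]
      refine (abs_sum_le_sum_abs _ _).trans ((sum_le_sum fun i hi => ?_).trans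
        ((hy f).sum_le_tsum _ fun i _ => abs_nonneg _))
      rw [abs_mul]
      exact mul_le_of_le_one_left (abs_nonneg _) (hβ i (mem_range.1 hi))⟩
  refine ⟨C, fun m β B hB hβ => ?_⟩
  rcases hB.eq_or_lt with rfl | hB
  · rw [sum_eq_zero fun i hi => by rw [abs_nonpos_iff.1 (hβ i (mem_range.1 hi)), zero_smul]]
    simp
  have := hC ⟨(m, fun i => B⁻¹ * β i), fun i hi => by
    rw [abs_mul, abs_of_pos (inv_pos.2 hB), inv_mul_le_one₀ hB]; exact hβ i hi⟩
  simp only [← smul_smul, ← smul_sum, norm_smul, Real.norm_eq_abs, abs_inv, abs_of_pos hB] at this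
  rwa [inv_mul_le_iff₀ hB, mul_comm] at this

theorem WeakLim.add {u v : ℕ → E} {a b : E} (hu : WeakLim u a) (hv : WeakLim v b) :
    WeakLim (fun n => u n + v n) (a + b) := fun f => by
  simpa only [map_add] using (hu f).add (hv f)

namespace WeakCauchySeq

variable {x s : ℕ → E}

theorem of_weakLim_sub (hx : WeakCauchySeq x) (h : WeakLim (fun n => x n - s n) 0) :
    WeakCauchySeq s := fun f => by
  obtain ⟨l, hl⟩ := hx f
  exact ⟨l, by simpa only [map_sub, map_zero, sub_zero, sub_sub_cancel] using hl.sub (h f)⟩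

theorem weakLim_sub_comp (hs : WeakCauchySeq s) {ψ : ℕ → ℕ} (hψ : Tendsto ψ atTop atTop) :
    WeakLim (fun n => s n - s (ψ n)) 0 := fun f => by
  obtain ⟨l, hl⟩ := hs f
  simpa only [map_sub, map_zero, sub_self, Function.comp_apply] using hl.sub (hl.comp hψ)

theorem exists_norm_le (hx : WeakCauchySeq x) : ∃ R, ∀ n, ‖x n‖ ≤ R :=
  exists_bound_of_weakly_bounded x fun f => by
    obtain ⟨l, hl⟩ := hx f
    obtain ⟨C, hC⟩ := hl.norm.bddAbove_range
    exact ⟨C, fun n => hC ⟨n, rfl⟩⟩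

theorem exists_tendsto_bidual (hx : WeakCauchySeq x) :
    ∃ z : StrongDual ℝ (StrongDual ℝ E), ∀ f, Tendsto (fun n => f (x n)) atTop (𝓝 (z f)) := by
  obtain ⟨R, hR⟩ := hx.exists_norm_le
  choose l hl using hx
  let z : StrongDual ℝ E →ₗ[ℝ] ℝ :=
    { toFun := l
      map_add' f g := tendsto_nhds_unique (hl (f + g)) (by simpa using (hl f).add (hl g))
      map_smul' c f := tendsto_nhds_unique (hl (c • f)) (by simpa using (hl f).const_mul c) }
  refine ⟨z.mkContinuous R fun f =>
    le_of_tendsto (hl f).norm (Eventually.of_forall fun n => ?_), hl⟩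
  calc ‖f (x n)‖ ≤ ‖f‖ * ‖x n‖ := f.le_opNorm _
    _ ≤ R * ‖f‖ := by rw [mul_comm]; exact mul_le_mul_of_nonneg_right (hR n) (norm_nonneg f)

end WeakCauchySeq

theorem exists_dual_eq_one_of_le_norm_sub {ι : Type*} [Fintype ι] (v : ι → E)
    {z : StrongDual ℝ (StrongDual ℝ E)} {d : ℝ} (hd : 0 < d)
    (hz : ∀ x : E, d ≤ ‖z - inclusionInDoubleDual ℝ E x‖) :
    ∃ f : StrongDual ℝ E, ‖f‖ ≤ 2 / d ∧ (∀ i, f (v i) = 0) ∧ z f = 1 := by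
  set ev : ι → StrongDual ℝ E →ₗ[ℝ] ℝ := fun i => inclusionInDoubleDual ℝ E (v i)
  set K : Submodule ℝ (StrongDual ℝ E) := ⨅ i, LinearMap.ker (ev i)
  have hK : ∀ f, f ∈ K ↔ ∀ i, f (v i) = 0 := by simp [K, ev]
  obtain ⟨g, hgz, hg⟩ := exists_extension_norm_eq K (z.comp K.subtypeL)
  -- `z - g` vanishes on the annihilator `K` of the `v i`, hence it is evaluation at some `x`
  have hspan : ((z - g : StrongDual ℝ (StrongDual ℝ E)) : StrongDual ℝ E →ₗ[ℝ] ℝ) ∈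
      Submodule.span ℝ (Set.range ev) :=
    mem_span_of_iInf_ker_le_ker fun f hf => by
      simpa [sub_eq_zero] using (hgz ⟨f, hf⟩).symm
  obtain ⟨c, hc⟩ := (Submodule.mem_span_range_iff_exists_fun ℝ).1 hspan
  have hzg : z - inclusionInDoubleDual ℝ E (∑ i, c i • v i) = g := by
    ext f
    have := congrArg (fun φ : StrongDual ℝ E →ₗ[ℝ] ℝ => φ f) hc
    simp only [LinearMap.coe_sum, LinearMap.coe_smul, ContinuousLinearMap.coe_coe, Finset.sum_apply,
      Pi.smul_apply, dual_def, smul_eq_mul, ContinuousLinearMap.toLinearMap_sub,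
      LinearMap.sub_apply, ev] at this
    simp [map_sum, this]
  have hdg : d / 2 < ‖g‖ := by
    rw [← hzg]
    linarith [hz (∑ i, c i • v i)]
  have hK' : ¬∀ f ∈ K, |z f| ≤ d / 2 * ‖f‖ := fun h => by
    have : ‖g‖ ≤ d / 2 := by
      rw [hg]
      exact ContinuousLinearMap.opNorm_le_bound _ (half_pos hd).le fun f => h f f.2
    linarith
  push Not at hK'
  obtain ⟨f, hfK, hzf⟩ := hK'
  have hzf0 : 0 < |z f| := (mul_nonneg (half_pos hd).le (norm_nonneg f)).trans_lt hzf
  refine ⟨(z f)⁻¹ • f, ?_, fun i => by simp [(hK f).1 hfK i],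
    by rw [map_smul, smul_eq_mul, inv_mul_cancel₀ (abs_pos.1 hzf0)]⟩
  rw [norm_smul, norm_inv, Real.norm_eq_abs, inv_mul_le_iff₀ hzf0]
  calc ‖f‖ = d / 2 * ‖f‖ * (2 / d) := by field_simp
    _ ≤ |z f| * (2 / d) := by gcongr

theorem WeakCauchySeq.exists_separating [CompleteSpace E] {s : ℕ → E} (hs : WeakCauchySeq s)
    (hns : ¬∃ z, WeakLim s z) :
    ∃ M, ∀ G : Finset ℕ, ∃ f : StrongDual ℝ E, ‖f‖ ≤ M ∧ (∀ i ∈ G, f (s i) = 0) ∧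
      Tendsto (fun n => f (s n)) atTop (𝓝 1) := by
  obtain ⟨z, hz⟩ := hs.exists_tendsto_bidual
  have hzE : z ∉ Set.range (inclusionInDoubleDual ℝ E) := by
    rintro ⟨v, rfl⟩
    exact hns ⟨v, hz⟩
  have hiso : Isometry (inclusionInDoubleDual ℝ E) := (inclusionInDoubleDualLi ℝ).isometry
  have hclosed := hiso.isClosedEmbedding.isClosed_range
  set d := Metric.infDist z (Set.range (inclusionInDoubleDual ℝ E))
  have hd : 0 < d := (hclosed.notMem_iff_infDist_pos ⟨_, 0, rfl⟩).1 hzE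
  refine ⟨2 / d, fun G => ?_⟩
  obtain ⟨f, hfM, hf0, hf1⟩ := exists_dual_eq_one_of_le_norm_sub (fun i : G => s i) hd
    fun x => dist_eq_norm z (inclusionInDoubleDual ℝ E x) ▸
      Metric.infDist_le_dist_of_mem (Set.mem_range_self x)
  exact ⟨f, hfM, fun i hi => hf0 ⟨i, hi⟩, hf1 ▸ hz f⟩

theorem exists_strictMono_almost_biorthogonal (u : Finset ℕ → ℕ → ℝ)
    (hu0 : ∀ G, ∀ i ∈ G, u G i = 0) (hu1 : ∀ G, Tendsto (u G) atTop (𝓝 1))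
    {ε : ℕ → ℝ} (hε : ∀ i, 0 < ε i) :
    ∃ ψ : ℕ → ℕ, StrictMono ψ ∧ ∀ k i,
      (i < k → u ((range k).image ψ) (ψ i) = 0) ∧
      (k ≤ i → |u ((range k).image ψ) (ψ i) - 1| ≤ ε i) := by
  -- closeness for every `J ⊆ G` makes `next (st i)` good for all the earlier `st k ⊆ st i`
  have hnext : ∀ G : Finset ℕ, ∃ n, (∀ i ∈ G, i < n) ∧
      ∀ J ∈ G.powerset, |u J n - 1| ≤ ε G.card := by
    intro G
    have hJ : ∀ J ∈ G.powerset, ∀ᶠ n in atTop, |u J n - 1| ≤ ε G.card := fun J _ =>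
      ((hu1 J).eventually (Metric.closedBall_mem_nhds 1 (hε G.card))).mono fun n hn => by
        rwa [Real.dist_eq] at hn
    obtain ⟨n, hnG, hnJ⟩ :=
      ((eventually_gt_atTop (G.sup id)).and ((eventually_all_finset _).2 hJ)).exists
    exact ⟨n, fun i hi => (le_sup (f := id) hi).trans_lt hnG, hnJ⟩
  choose next hnext_gt hnext_close using hnext
  let st : ℕ → Finset ℕ := fun k => Nat.rec ∅ (fun _ G => insert (next G) G) k
  let ψ : ℕ → ℕ := fun k => next (st k)
  have hst : ∀ k, st k = (range k).image ψ := by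
    intro k
    induction k with
    | zero => rfl
    | succ k ih => rw [range_add_one, image_insert, ← ih]
  have hψ : StrictMono ψ :=
    strictMono_nat_of_lt_succ fun k => hnext_gt (st (k + 1)) (ψ k) (mem_insert_self _ _)
  refine ⟨ψ, hψ, fun k i => ⟨fun hik => ?_, fun hki => ?_⟩⟩
  · rw [← hst]
    exact hu0 _ _ (hst k ▸ mem_image_of_mem ψ (mem_range.2 hik))
  · have hsub : st k ⊆ st i := by
      rw [hst, hst]
      exact image_subset_image (range_subset_range.2 hki)
    have hcard : (st i).card = i := by
      rw [hst, card_image_of_injective _ hψ.injective, card_range]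
    have := hnext_close (st i) (st k) (mem_powerset.2 hsub)
    rw [← hst k]
    rwa [hcard] at this

theorem sum_Ico_half_pow_le (k m : ℕ) : ∑ i ∈ Ico k m, (1 / 2 : ℝ) ^ (i + 3) ≤ 1 / 4 :=
  calc _ ≤ ∑ i ∈ range m, (1 / 2 : ℝ) ^ (i + 3) :=
        sum_le_sum_of_subset_of_nonneg (fun i hi => mem_range.2 (mem_Ico.1 hi).2)
          fun _ _ _ => by positivity
    _ = 1 / 8 * ∑ i ∈ range m, (1 / 2 : ℝ) ^ i := by
        rw [mul_sum]; exact sum_congr rfl fun i _ => by ring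
    _ ≤ 1 / 8 * 2 := by gcongr; exact sum_geometric_two_le m
    _ = 1 / 4 := by norm_num

theorem summingNorm_le_of_almost_biorthogonal {t : ℕ → E} {g : ℕ → StrongDual ℝ E} {M : ℝ}
    (hg : ∀ k, ‖g k‖ ≤ M) (h0 : ∀ k i, i < k → g k (t i) = 0)
    (h1 : ∀ k i, k ≤ i → |g k (t i) - 1| ≤ (1 / 2) ^ (i + 3)) (m : ℕ) (b : ℕ → ℝ) :
    summingNorm m b ≤ 2 * M * ‖∑ i ∈ range m, b i • t i‖ := by
  set W := ∑ i ∈ range m, b i • t i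
  set S := summingNorm m b
  have hS : 0 ≤ 2 * S := mul_nonneg zero_le_two (summingNorm_nonneg m b)
  -- `g k` reads off the tail from `k` of the coefficients, up to an error of at most `S / 2`
  have htail : ∀ k ≤ m, |∑ i ∈ Ico k m, b i| ≤ M * ‖W‖ + S / 2 := by
    intro k hk
    have hgW : g k W = ∑ i ∈ Ico k m, b i * g k (t i) := by
      simp only [W, map_sum, map_smul, smul_eq_mul]
      rw [← sum_range_add_sum_Ico _ hk,
        sum_eq_zero fun i hi => by rw [h0 k i (mem_range.1 hi), mul_zero], zero_add]
    have herr : |∑ i ∈ Ico k m, b i * (g k (t i) - 1)| ≤ S / 2 :=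
      calc _ ≤ ∑ i ∈ Ico k m, 2 * S * (1 / 2 : ℝ) ^ (i + 3) :=
            (abs_sum_le_sum_abs _ _).trans (sum_le_sum fun i hi => by
              rw [abs_mul]
              exact mul_le_mul (abs_le_two_mul_summingNorm (mem_Ico.1 hi).2 b)
                (h1 k i (mem_Ico.1 hi).1) (abs_nonneg _) hS)
        _ = 2 * S * ∑ i ∈ Ico k m, (1 / 2 : ℝ) ^ (i + 3) := (mul_sum _ _ _).symm
        _ ≤ 2 * S * (1 / 4) := mul_le_mul_of_nonneg_left (sum_Ico_half_pow_le k m) hS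
        _ = S / 2 := by ring
    calc |∑ i ∈ Ico k m, b i| = |g k W - ∑ i ∈ Ico k m, b i * (g k (t i) - 1)| := by
          rw [hgW, ← sum_sub_distrib]
          exact congrArg _ (sum_congr rfl fun i _ => by ring)
      _ ≤ |g k W| + |∑ i ∈ Ico k m, b i * (g k (t i) - 1)| := abs_sub _ _
      _ ≤ M * ‖W‖ + S / 2 :=
          add_le_add (((g k).le_opNorm W).trans (mul_le_mul_of_nonneg_right (hg k) (norm_nonneg W)))
            herr
  linarith [summingNorm_le htail]

theorem norm_sum_smul_partialSum_le {y : ℕ → E} {C : ℝ}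
    (hC : ∀ m (β : ℕ → ℝ) B, 0 ≤ B → (∀ i < m, |β i| ≤ B) →
      ‖∑ i ∈ range m, β i • y i‖ ≤ C * B)
    {ψ : ℕ → ℕ} (hψ : Monotone ψ) (m : ℕ) (b : ℕ → ℝ) :
    ‖∑ i ∈ range m, b i • ∑ j ∈ range (ψ i + 1), y j‖ ≤ C * summingNorm m b := by
  have hsum : ∑ i ∈ range m, b i • ∑ j ∈ range (ψ i + 1), y j =
      ∑ j ∈ range (ψ m + 1), (∑ i ∈ range m, b i * if j ≤ ψ i then 1 else 0) • y j := by
    rw [← sum_smul_sum_smul_comm]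
    refine sum_congr rfl fun i hi => congrArg _ ?_
    simp_rw [ite_smul, one_smul, zero_smul, ← sum_filter]
    congr 1
    ext j
    have := hψ (mem_range.1 hi).le
    simp only [mem_filter, mem_range]
    omega
  rw [hsum]
  refine hC _ _ _ (summingNorm_nonneg m b) fun j _ =>
    abs_sum_mul_le_summingNorm (c := fun i => if j ≤ ψ i then 1 else 0) ?_
      (by split_ifs <;> norm_num) (fun i => by split_ifs <;> norm_num) m b
  intro i i' hii'
  dsimp only
  split_ifs with h h' <;> first | exact absurd (h.trans (hψ hii')) h' | norm_num

/-- Pełczyński's property (u) implies property (su). -/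
theorem propertyU_implies_propertySU
    (X : Type*) [NormedAddCommGroup X] [NormedSpace ℝ X] [CompleteSpace X]
    (hu : PropertyU X) : PropertySU X := by
  intro x hx hnx
  obtain ⟨y, hy, hxs⟩ := hu x hx
  set s : ℕ → X := fun n => ∑ i ∈ range (n + 1), y i
  have hs : WeakCauchySeq s := hx.of_weakLim_sub hxs
  have hns : ¬∃ z, WeakLim s z := fun ⟨z, hz⟩ =>
    hnx ⟨z, by simpa only [s, add_sub_cancel, add_zero] using hz.add hxs⟩
  obtain ⟨M, hsep⟩ := hs.exists_separating hns
  choose f hfM hf0 hf1 using hsep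
  obtain ⟨ψ, hψ, hg⟩ := exists_strictMono_almost_biorthogonal (fun G n => f G (s n)) hf0 hf1
    (ε := fun i => (1 / 2) ^ (i + 3)) fun i => by positivity
  obtain ⟨C, hC⟩ := exists_norm_sum_smul_le_of_summable hy
  have ht : EquivSummingBasisWith (max (2 * M) C) (s ∘ ψ) :=
    .of_bounds (summingNorm_le_of_almost_biorthogonal (fun k => hfM _)
        (fun k i => (hg k i).1) fun k i => (hg k i).2)
      (norm_sum_smul_partialSum_le hC hψ.monotone)
  refine ⟨s ∘ ψ, ht.convexBlockShiftable, ?_⟩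
  simpa only [s, Function.comp_apply, sub_add_sub_cancel, add_zero] using
    hxs.add (hs.weakLim_sub_comp hψ.tendsto_atTop)

end
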